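/- arXiv:2412.11218 — 3 statements merged into one kernel-verified Lean document; each statement's English description precedes it below -/
import Mathlib

section
/- Let g : ℝ^r → ℝ be μ-strongly convex with minimizer y*, and let p(y) = f(y) + λ(g(y) - g(y*)) be μ_λ-strongly convex with minimizer y_λ*, where f is differentiable and ‖∇f(y*)‖ ≤ C. If λ > 2L_{f,1}/μ so that μ_λ = λμ/2, then ‖y* - y_λ*‖ ≤ 2C/(λμ). -/
/-!
Quadratic growth of the strongly convex functions `p` and `g` around their minimizers gives
`p(y_λ) + (λμ/4) D² ≤ p(y*)` and `λ (g(y_λ) - g(y*)) ≥ (λμ/2) D²`, where `D = ‖y* - y_λ‖`, while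
the Lipschitz gradient bounds `f(y_λ) ≥ f(y*) - C D - (L/2) D²`. Adding up, `(3λμ/4 - L/2) D² ≤ C D`,
and `L < λμ/2` turns this into `(λμ/2) D ≤ C`.
-/

open Set Filter Topology
open scoped RealInnerProductSpace

theorem StrongConvexOn.quadratic_growth_of_isMinOn {E : Type*} [NormedAddCommGroup E]
    [NormedSpace ℝ E] {s : Set E} {m : ℝ} {f : E → ℝ} {x y : E} (hf : StrongConvexOn s m f)
    (hmin : IsMinOn f s x) (hx : x ∈ s) (hy : y ∈ s) :
    f x + m / 2 * ‖y - x‖ ^ 2 ≤ f y := by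
  set c := m / 2 * ‖y - x‖ ^ 2 with hc
  have along_segment : ∀ t ∈ Ioo (0 : ℝ) 1, f x + (1 - t) * c ≤ f y := by
    intro t ⟨ht₀, ht₁⟩
    have hconv := hf.2 hy hx ht₀.le (sub_nonneg.2 ht₁.le) (add_sub_cancel t 1)
    have hmin_t : f x ≤ f (t • y + (1 - t) • x) := hmin (hf.1 hy hx ht₀.le (sub_nonneg.2 ht₁.le)
      (add_sub_cancel t 1))
    simp only [smul_eq_mul, ← hc] at hconv
    have : t * (f x + (1 - t) * c) ≤ t * f y := by linarith
    exact le_of_mul_le_mul_left this ht₀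
  have hlim : Tendsto (fun t : ℝ => f x + (1 - t) * c) (𝓝[>] 0) (𝓝 (f x + c)) := by
    refine tendsto_nhdsWithin_of_tendsto_nhds ?_
    simpa using (show Continuous fun t : ℝ => f x + (1 - t) * c by fun_prop).tendsto 0
  exact le_of_tendsto hlim (eventually_of_mem (Ioo_mem_nhdsGT one_pos) along_segment)

section LipschitzGradient

variable {E : Type*} [NormedAddCommGroup E] [InnerProductSpace ℝ E] [CompleteSpace E]
  {f : E → ℝ} {f' : E → E} {L : ℝ}

theorem HasGradientAt.hasDerivAt_comp_add_smul {x d : E} {t : ℝ}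
    (hf : HasGradientAt f (f' (x + t • d)) (x + t • d)) :
    HasDerivAt (fun s : ℝ => f (x + s • d)) ⟪f' (x + t • d), d⟫ t := by
  have hline : HasDerivAt (fun s : ℝ => x + s • d) d t := by
    simpa using ((hasDerivAt_id t).smul_const d).const_add x
  simpa [Function.comp_def] using hf.hasFDerivAt.comp_hasDerivAt t hline

theorem quadratic_lower_bound_of_lipschitz_gradient (hf : ∀ y, HasGradientAt f (f' y) y)
    (hlip : ∀ y₁ y₂, ‖f' y₁ - f' y₂‖ ≤ L * ‖y₁ - y₂‖) (x y : E) :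
    f x + ⟪f' x, y - x⟫ - L / 2 * ‖y - x‖ ^ 2 ≤ f y := by
  set d := y - x
  set φ : ℝ → ℝ := fun t => f (x + t • d) - t * ⟪f' x, d⟫ + L / 2 * t ^ 2 * ‖d‖ ^ 2
  have hφ : ∀ t, HasDerivAt φ (⟪f' (x + t • d), d⟫ - ⟪f' x, d⟫ + L * t * ‖d‖ ^ 2) t := by
    intro t
    have hquad := ((hasDerivAt_pow 2 t).const_mul (L / 2)).mul_const (‖d‖ ^ 2)
    exact (((hf _).hasDerivAt_comp_add_smul.sub ((hasDerivAt_id t).mul_const _)).add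
      hquad).congr_deriv (by push_cast; ring)
  have hφ' : ∀ t ∈ interior (Icc (0 : ℝ) 1), 0 ≤ deriv φ t := by
    intro t ht
    rw [interior_Icc] at ht
    have hlip_t : ‖f' (x + t • d) - f' x‖ ≤ L * t * ‖d‖ := by
      simpa [norm_smul, abs_of_pos ht.1, mul_assoc] using hlip (x + t • d) x
    have hinner : -(L * t * ‖d‖ ^ 2) ≤ ⟪f' (x + t • d) - f' x, d⟫ :=
      calc -(L * t * ‖d‖ ^ 2) = -(L * t * ‖d‖ * ‖d‖) := by ring
        _ ≤ -(‖f' (x + t • d) - f' x‖ * ‖d‖) := by gcongr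
        _ ≤ _ := neg_le_of_abs_le (abs_real_inner_le_norm _ _)
    rw [(hφ t).deriv, ← inner_sub_left]
    linarith
  have hmono : MonotoneOn φ (Icc 0 1) :=
    monotoneOn_of_deriv_nonneg (convex_Icc 0 1)
      (fun t _ => (hφ t).continuousAt.continuousWithinAt)
      (fun t _ => (hφ t).differentiableAt.differentiableWithinAt) hφ'
  have h01 := hmono (left_mem_Icc.2 zero_le_one) (right_mem_Icc.2 zero_le_one) zero_le_one
  simp only [φ, d, zero_smul, add_zero, zero_mul, sub_zero, one_smul, add_sub_cancel,
    one_mul, one_pow, ne_eq, OfNat.ofNat_ne_zero, not_false_eq_true, zero_pow, mul_zero] at h01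
  linarith

end LipschitzGradient

/-- Lemma 1 (inner-level penalty error): if `g` is `μ`-strongly convex with minimizer `y*`,
`f` has `L`-Lipschitz gradient with `‖∇f(y*)‖ ≤ C`, `λ > 2L/μ`, and the penalty function
`p(y) = f y + λ (g y - g y*)` is `(λμ/2)`-strongly convex with minimizer `yλ*`, then
`‖y* - yλ*‖ ≤ 2C/(λμ)`. -/
theorem stmt1 {r : ℕ} (μ L C lam : ℝ)
    (f g : EuclideanSpace ℝ (Fin r) → ℝ)
    (f' : EuclideanSpace ℝ (Fin r) → EuclideanSpace ℝ (Fin r))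
    (ystar ylam : EuclideanSpace ℝ (Fin r))
    (hμ : 0 < μ) (hL : 0 ≤ L)
    (hg : StrongConvexOn univ μ g)
    (hgmin : IsMinOn g univ ystar)
    (hf : ∀ y, HasGradientAt f (f' y) y)
    (hflip : ∀ y₁ y₂, ‖f' y₁ - f' y₂‖ ≤ L * ‖y₁ - y₂‖)
    (hC : ‖f' ystar‖ ≤ C)
    (hlam : lam > 2 * L / μ)
    (hp : StrongConvexOn univ (lam * μ / 2) (fun y => f y + lam * (g y - g ystar)))
    (hpmin : IsMinOn (fun y => f y + lam * (g y - g ystar)) univ ylam) :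
    ‖ystar - ylam‖ ≤ 2 * C / (lam * μ) := by
  have hlamμ : 2 * L < lam * μ := by rwa [gt_iff_lt, div_lt_iff₀ hμ] at hlam
  have hlam0 : 0 < lam := pos_of_mul_pos_left (by linarith) hμ.le
  have hp_growth := hp.quadratic_growth_of_isMinOn hpmin (mem_univ _) (mem_univ ystar)
  have hg_growth := hg.quadratic_growth_of_isMinOn hgmin (mem_univ _) (mem_univ ylam)
  have hf_lower := quadratic_lower_bound_of_lipschitz_gradient hf hflip ystar ylam
  have hinner : -(C * ‖ylam - ystar‖) ≤ ⟪f' ystar, ylam - ystar⟫ :=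
    (neg_le_neg (by gcongr)).trans (neg_le_of_abs_le (abs_real_inner_le_norm _ _))
  rw [norm_sub_rev ylam] at hg_growth hf_lower hinner
  simp only [sub_self, mul_zero, add_zero] at hp_growth
  set D := ‖ystar - ylam‖
  have hquad : lam * μ / 2 * D * D ≤ C * D := by nlinarith [sq_nonneg D]
  rcases (norm_nonneg _ : 0 ≤ D).eq_or_lt with hD0 | hD0
  · exact hD0.symm.le.trans <| div_nonneg (by linarith [norm_nonneg (f' ystar)]) (by positivity)
  · rw [le_div_iff₀ (by positivity)]
    linarith [le_of_mul_le_mul_right hquad hD0]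
end

section
/- Danskin-type identity: if g(x,y) is continuously differentiable, g(x,·) is μ-strongly convex for each x, and y*(x) is its unique minimizer, then the value function g*(x) = g(x, y*(x)) is differentiable with ∇g*(x) = ∇ₓg(x, y*(x)). -/
/-!
Since `y*(x)` minimizes `g(x, ·)`, the increment `g*(x) - g*(x₀)` lies between
`g(x, y*(x)) - g(x₀, y*(x))` and `g(x, y*(x₀)) - g(x₀, y*(x₀))`. By the mean value inequality both
are `⟪∇ₓg(x₀, y*(x₀)), x - x₀⟫ + o(‖x - x₀‖)`, because `∇ₓg` is jointly continuous and `y*` is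
continuous at `x₀`. Continuity of `y*` comes from strong convexity: quadratic growth at the
minimizer together with the first-order convexity inequality give
`‖y*(x) - y*(x₀)‖ ≤ (4 / μ) ‖∇_y g(x, y*(x₀))‖`, and `∇_y g(x₀, y*(x₀)) = 0`.
-/

open Set Filter Topology

section Convex

variable {E : Type*} [NormedAddCommGroup E] [NormedSpace ℝ E] {s : Set E} {f : E → ℝ}
  {f' : E →L[ℝ] ℝ} {x y m : E} {μ : ℝ}

theorem ConvexOn.add_apply_sub_le_of_hasFDerivAt (hf : ConvexOn ℝ s f) (hx : x ∈ s) (hy : y ∈ s)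
    (hf' : HasFDerivAt f f' x) : f x + f' (y - x) ≤ f y := by
  set ℓ : ℝ →ᵃ[ℝ] E := AffineMap.lineMap x y
  have hline : ConvexOn ℝ (ℓ ⁻¹' s) (f ∘ ℓ) := hf.comp_affineMap ℓ
  have hderiv : HasDerivAt (f ∘ ℓ) (f' (y - x)) 0 := by
    have hf'0 : HasFDerivAt f f' (ℓ 0) := by simpa [ℓ] using hf'
    exact hf'0.comp_hasDerivAt 0 AffineMap.hasDerivAt_lineMap
  have hslope := hline.le_slope_of_hasDerivAt (by simpa [ℓ] using hx) (by simpa [ℓ] using hy)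
    zero_lt_one hderiv
  simp only [slope_def_field, Function.comp_apply, AffineMap.lineMap_apply_one,
    AffineMap.lineMap_apply_zero, sub_zero, div_one, ℓ] at hslope
  linarith

theorem StrongConvexOn.mul_sq_norm_sub_le_of_isMinOn (hf : StrongConvexOn s μ f)
    (hm : IsMinOn f s m) (hms : m ∈ s) (hy : y ∈ s) : μ / 4 * ‖y - m‖ ^ 2 ≤ f y - f m := by
  have hmid := hf.2 hy hms (by norm_num : (0 : ℝ) ≤ 1 / 2) (by norm_num : (0 : ℝ) ≤ 1 / 2)
    (by norm_num)
  have hm_le : f m ≤ f ((1 / 2 : ℝ) • y + (1 / 2 : ℝ) • m) :=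
    hm (hf.1 hy hms (by norm_num) (by norm_num) (by norm_num))
  simp only [smul_eq_mul] at hmid
  nlinarith

theorem StrongConvexOn.norm_sub_le_of_isMinOn (hμ : 0 < μ) (hf : StrongConvexOn s μ f)
    (hm : IsMinOn f s m) (hms : m ∈ s) (hy : y ∈ s) (hf' : HasFDerivAt f f' y) :
    ‖m - y‖ ≤ 4 / μ * ‖f'‖ := by
  have hconv : ConvexOn ℝ s f := hf.convexOn fun r => by positivity
  have hgrowth := hf.mul_sq_norm_sub_le_of_isMinOn hm hms hy
  have hfirst := hconv.add_apply_sub_le_of_hasFDerivAt hy hms hf'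
  have hop : -f' (m - y) ≤ ‖f'‖ * ‖m - y‖ := (neg_le_abs _).trans (f'.le_opNorm _)
  rw [norm_sub_rev] at hgrowth
  rcases (norm_nonneg (m - y)).eq_or_lt with hzero | hpos
  · rw [← hzero]
    positivity
  · have hsq : μ / 4 * ‖m - y‖ * ‖m - y‖ ≤ ‖f'‖ * ‖m - y‖ := by nlinarith
    have hlin := le_of_mul_le_mul_right hsq hpos
    rw [div_mul_eq_mul_div, le_div_iff₀ hμ]
    linarith

end Convex

section Argmin

variable {E F : Type*} {g : E → F → ℝ} {ystar : E → F} {x₀ : E}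

theorem continuousAt_of_isMinOn_of_strongConvexOn [TopologicalSpace E] [NormedAddCommGroup F]
    [NormedSpace ℝ F] {μ : ℝ} {g'y : E → F →L[ℝ] ℝ} (hμ : 0 < μ)
    (hsc : ∀ x, StrongConvexOn univ μ (g x)) (hmin : ∀ x, IsMinOn (g x) univ (ystar x))
    (hg' : ∀ x, HasFDerivAt (g x) (g'y x) (ystar x₀)) (hcont : ContinuousAt g'y x₀) :
    ContinuousAt ystar x₀ := by
  have hzero : g'y x₀ = 0 := ((hmin x₀).isLocalMin univ_mem).hasFDerivAt_eq_zero (hg' x₀)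
  have hbound : ∀ x, ‖ystar x - ystar x₀‖ ≤ 4 / μ * ‖g'y x‖ := fun x =>
    (hsc x).norm_sub_le_of_isMinOn hμ (hmin x) (mem_univ _) (mem_univ _) (hg' x)
  have hlim : Tendsto (fun x => 4 / μ * ‖g'y x‖) (𝓝 x₀) (𝓝 0) := by
    simpa [hzero] using (hcont.norm.const_mul (4 / μ)).tendsto
  rw [ContinuousAt, tendsto_iff_norm_sub_tendsto_zero]
  exact squeeze_zero (fun _ => norm_nonneg _) hbound hlim

theorem eventually_norm_sub_sub_le_of_continuousAt [NormedAddCommGroup E] [NormedSpace ℝ E]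
    [TopologicalSpace F] {g' : E → F → E →L[ℝ] ℝ} {y₀ : F} {c : ℝ}
    (hg' : ∀ x y, HasFDerivAt (g · y) (g' x y) x)
    (hcont : ContinuousAt (fun p : E × F => g' p.1 p.2) (x₀, y₀)) (hc : 0 < c) :
    ∀ᶠ p in 𝓝 (x₀, y₀), ‖g p.1 p.2 - g x₀ p.2 - g' x₀ y₀ (p.1 - x₀)‖ ≤ c * ‖p.1 - x₀‖ := by
  have hnear : ∀ᶠ p in 𝓝 (x₀, y₀), ‖g' p.1 p.2 - g' x₀ y₀‖ < c := by
    simpa [dist_eq_norm] using hcont.eventually (Metric.ball_mem_nhds _ hc)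
  obtain ⟨U, hU, V, hV, hUV⟩ := mem_nhds_prod_iff.mp hnear
  obtain ⟨δ, hδ, hball⟩ := Metric.mem_nhds_iff.mp hU
  filter_upwards [prod_mem_nhds (Metric.ball_mem_nhds x₀ hδ) hV] with ⟨x, y⟩ ⟨hx, hy⟩
  refine (convex_ball x₀ δ).norm_image_sub_le_of_norm_hasFDerivWithin_le'
    (fun x' _ => (hg' x' y).hasFDerivWithinAt) (fun x' hx' => ?_) (Metric.mem_ball_self hδ) hx
  exact (hUV (mk_mem_prod (hball hx') hy)).le

theorem hasFDerivAt_of_isMinOn [NormedAddCommGroup E] [NormedSpace ℝ E] [TopologicalSpace F]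
    {g' : E → F → E →L[ℝ] ℝ} (hmin : ∀ x, IsMinOn (g x) univ (ystar x))
    (hy : ContinuousAt ystar x₀) (hg' : ∀ x y, HasFDerivAt (g · y) (g' x y) x)
    (hcont : ContinuousAt (fun p : E × F => g' p.1 p.2) (x₀, ystar x₀)) :
    HasFDerivAt (fun x => g x (ystar x)) (g' x₀ (ystar x₀)) x₀ := by
  rw [hasFDerivAt_iff_isLittleO, Asymptotics.isLittleO_iff]
  intro c hc
  have hunif := eventually_norm_sub_sub_le_of_continuousAt hg' hcont hc
  have hat_min : ∀ᶠ x in 𝓝 x₀, ‖g x (ystar x) - g x₀ (ystar x) - g' x₀ (ystar x₀) (x - x₀)‖ ≤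
      c * ‖x - x₀‖ :=
    (continuousAt_id.prodMk hy).preimage_mem_nhds hunif
  have hat_fixed : ∀ᶠ x in 𝓝 x₀, ‖g x (ystar x₀) - g x₀ (ystar x₀) -
      g' x₀ (ystar x₀) (x - x₀)‖ ≤ c * ‖x - x₀‖ :=
    (continuousAt_id.prodMk continuousAt_const).preimage_mem_nhds hunif
  filter_upwards [hat_min, hat_fixed] with x hlower hupper
  have hx : g x (ystar x) ≤ g x (ystar x₀) := hmin x (mem_univ _)
  have hx₀ : g x₀ (ystar x₀) ≤ g x₀ (ystar x) := hmin x₀ (mem_univ _)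
  rw [Real.norm_eq_abs, abs_le] at hlower hupper ⊢
  constructor <;> linarith [hlower.1, hupper.2]

end Argmin

/-- Danskin-type identity: if `g` is `C¹` jointly, `g(x,·)` is `μ`-strongly convex with unique
minimizer `y*(x)`, then the value function `g*(x) = g(x, y*(x))` is differentiable with
gradient `∇g*(x) = ∇ₓ g(x, y*(x))`. -/
theorem stmt7 {n r : ℕ} (μ : ℝ)
    (g : EuclideanSpace ℝ (Fin n) → EuclideanSpace ℝ (Fin r) → ℝ)
    (gx : EuclideanSpace ℝ (Fin n) → EuclideanSpace ℝ (Fin r) → EuclideanSpace ℝ (Fin n))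
    (ystar : EuclideanSpace ℝ (Fin n) → EuclideanSpace ℝ (Fin r))
    (hμ : 0 < μ)
    (hC1 : ContDiff ℝ 1 (fun p : EuclideanSpace ℝ (Fin n) × EuclideanSpace ℝ (Fin r) =>
      g p.1 p.2))
    (hsc : ∀ x, StrongConvexOn univ μ (g x))
    (hmin : ∀ x, IsMinOn (g x) univ (ystar x))
    (hgx : ∀ x y, HasGradientAt (fun x' => g x' y) (gx x y) x) :
    ∀ x, HasGradientAt (fun x' => g x' (ystar x')) (gx x (ystar x)) x := by
  intro x₀
  set G := fun p : EuclideanSpace ℝ (Fin n) × EuclideanSpace ℝ (Fin r) => g p.1 p.2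
  have hG : Differentiable ℝ G := hC1.differentiable one_ne_zero
  have hDG : Continuous (fderiv ℝ G) := hC1.continuous_fderiv one_ne_zero
  have hDx : ∀ x y, HasFDerivAt (g · y) ((fderiv ℝ G (x, y)).comp (.inl ℝ _ _)) x :=
    fun x y => ((hG (x, y)).hasFDerivAt.comp x (hasFDerivAt_prodMk_left (𝕜 := ℝ) x y) :)
  have hDy : ∀ x y, HasFDerivAt (g x) ((fderiv ℝ G (x, y)).comp (.inr ℝ _ _)) y :=
    fun x y => ((hG (x, y)).hasFDerivAt.comp y (hasFDerivAt_prodMk_right (𝕜 := ℝ) x y) :)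
  have hy : ContinuousAt ystar x₀ :=
    continuousAt_of_isMinOn_of_strongConvexOn hμ hsc hmin (fun x => hDy x (ystar x₀))
      ((hDG.comp (continuous_id.prodMk continuous_const)).clm_comp continuous_const).continuousAt
  have hV := hasFDerivAt_of_isMinOn hmin hy hDx (hDG.clm_comp continuous_const).continuousAt
  rw [hasGradientAt_iff_hasFDerivAt, (hgx x₀ (ystar x₀)).hasFDerivAt.unique (hDx _ _)]
  exact hV
end

section
/- Suppose the hypergradient approximation satisfies ‖∇Φ(x̄ᵏ) - h̄ₓᵏ‖² ≤ C² for all k, Φ is L-smooth and bounded below by Φ*, and x̄ᵏ⁺¹ = x̄ᵏ - α h̄ₓᵏ with α ≤ 1/(2L). Then (1/K)∑_{k=0}^{K-1}‖∇Φ(x̄ᵏ)‖² ≤ 2(Φ(x̄⁰) - Φ*)/(αK) + C². -/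
open Set InnerProductSpace

local notation "⟪" x ", " y "⟫" => @inner ℝ _ _ x y

lemma quad_upper {n : ℕ} (L : ℝ) (Φ : EuclideanSpace ℝ (Fin n) → ℝ)
    (Φ' : EuclideanSpace ℝ (Fin n) → EuclideanSpace ℝ (Fin n))
    (hL : 0 ≤ L)
    (hgrad : ∀ y, HasGradientAt Φ (Φ' y) y)
    (hlip : ∀ y₁ y₂, ‖Φ' y₁ - Φ' y₂‖ ≤ L * ‖y₁ - y₂‖)
    (x y : EuclideanSpace ℝ (Fin n)) :
    Φ y ≤ Φ x + ⟪Φ' x, y - x⟫ + L * ‖y - x‖ ^ 2 := by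
  have hs : Convex ℝ (segment ℝ x y) := convex_segment x y
  have key := hs.norm_image_sub_le_of_norm_hasFDerivWithin_le'
    (f := Φ) (f' := fun z => (toDual ℝ _) (Φ' z)) (φ := (toDual ℝ _) (Φ' x))
    (C := L * ‖y - x‖)
    (fun z _ => ((hgrad z).hasFDerivAt).hasFDerivWithinAt)
    (fun z hz => by
      rw [← map_sub]
      have h1 : ‖(toDual ℝ (EuclideanSpace ℝ (Fin n))) (Φ' z - Φ' x)‖ = ‖Φ' z - Φ' x‖ :=
        (toDual ℝ _).norm_map _
      rw [h1]
      have h2 : ‖z - x‖ ≤ ‖y - x‖ := by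
        have := dist_add_dist_of_mem_segment hz
        have : dist x z ≤ dist x y := by linarith [dist_nonneg (x := z) (y := y)]
        simpa [dist_eq_norm, norm_sub_rev] using this
      calc ‖Φ' z - Φ' x‖ ≤ L * ‖z - x‖ := hlip z x
        _ ≤ L * ‖y - x‖ := mul_le_mul_of_nonneg_left h2 hL)
    (left_mem_segment ℝ x y) (right_mem_segment ℝ x y)
  have htd : (toDual ℝ (EuclideanSpace ℝ (Fin n))) (Φ' x) (y - x) = ⟪Φ' x, y - x⟫ := rfl
  rw [htd] at key
  have := abs_le.mp (by rwa [Real.norm_eq_abs] at key)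
  nlinarith [this.2]


/-- Aggregated descent: if `Φ` is `L`-smooth and bounded below by `Φ*`, the iterates satisfy
`x̄ᵏ⁺¹ = x̄ᵏ - α h̄ₓᵏ` with `α ≤ 1/(2L)` and `‖∇Φ(x̄ᵏ) - h̄ₓᵏ‖ ≤ C`, then
`(1/K)∑_{k<K} ‖∇Φ(x̄ᵏ)‖² ≤ 2(Φ(x̄⁰) - Φ*)/(αK) + C²`. -/
theorem stmt15 {n : ℕ} (L α C Φstar : ℝ)
    (Φ : EuclideanSpace ℝ (Fin n) → ℝ)
    (Φ' : EuclideanSpace ℝ (Fin n) → EuclideanSpace ℝ (Fin n))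
    (x h : ℕ → EuclideanSpace ℝ (Fin n))
    (K : ℕ)
    (hL : 0 < L) (hC : 0 ≤ C)
    (hgrad : ∀ y, HasGradientAt Φ (Φ' y) y)
    (hlip : ∀ y₁ y₂, ‖Φ' y₁ - Φ' y₂‖ ≤ L * ‖y₁ - y₂‖)
    (hbdd : ∀ y, Φstar ≤ Φ y)
    (hα0 : 0 < α) (hα : α ≤ 1 / (2 * L))
    (hupd : ∀ k, x (k + 1) = x k - α • h k)
    (happrox : ∀ k, ‖Φ' (x k) - h k‖ ≤ C)
    (hK : 0 < K) :
    (1 / (K : ℝ)) * ∑ k ∈ Finset.range K, ‖Φ' (x k)‖ ^ 2 ≤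
      2 * (Φ (x 0) - Φstar) / (α * K) + C ^ 2 := by
  have h2L : 2 * L * α ≤ 1 := by
    rw [le_div_iff₀ (by positivity)] at hα; linarith
  -- per-step descent
  have key : ∀ k, (α / 2) * ‖Φ' (x k)‖ ^ 2 ≤
      (Φ (x k) - Φ (x (k + 1))) + (α / 2) * C ^ 2 := by
    intro k
    have hq := quad_upper L Φ Φ' hL.le hgrad hlip (x k) (x (k + 1))
    have hdiff : x (k + 1) - x k = -(α • h k) := by rw [hupd]; abel
    rw [hdiff] at hq
    have hin : ⟪Φ' (x k), -(α • h k)⟫ = -(α * ⟪Φ' (x k), h k⟫) := by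
      rw [inner_neg_right, real_inner_smul_right]
    have hnr : ‖-(α • h k)‖ ^ 2 = α ^ 2 * ‖h k‖ ^ 2 := by
      rw [norm_neg, norm_smul, Real.norm_eq_abs, mul_pow, sq_abs]
    rw [hin, hnr] at hq
    have hid : ‖Φ' (x k) - h k‖ ^ 2 =
        ‖Φ' (x k)‖ ^ 2 - 2 * ⟪Φ' (x k), h k⟫ + ‖h k‖ ^ 2 := by
      rw [norm_sub_sq_real]
    have hsq : ‖Φ' (x k) - h k‖ ^ 2 ≤ C ^ 2 :=
      pow_le_pow_left₀ (norm_nonneg _) (happrox k) 2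
    nlinarith [mul_nonneg (mul_nonneg hα0.le (by linarith : (0:ℝ) ≤ 1 - 2 * L * α))
        (sq_nonneg ‖h k‖), mul_pos hα0 hL]
  -- sum up
  have hsum : (α / 2) * ∑ k ∈ Finset.range K, ‖Φ' (x k)‖ ^ 2 ≤
      (Φ (x 0) - Φstar) + (K : ℝ) * ((α / 2) * C ^ 2) := by
    have h1 : ∑ k ∈ Finset.range K, ((α / 2) * ‖Φ' (x k)‖ ^ 2) ≤
        ∑ k ∈ Finset.range K, ((Φ (x k) - Φ (x (k + 1))) + (α / 2) * C ^ 2) :=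
      Finset.sum_le_sum fun k _ => key k
    rw [← Finset.mul_sum] at h1
    rw [Finset.sum_add_distrib, Finset.sum_range_sub' (fun k => Φ (x k)),
      Finset.sum_const, Finset.card_range, nsmul_eq_mul] at h1
    have := hbdd (x K)
    linarith
  have hKpos : (0:ℝ) < K := by exact_mod_cast hK
  rw [← sub_nonneg]
  have expand : 2 * (Φ (x 0) - Φstar) / (α * K) + C ^ 2 -
      (1 / (K : ℝ)) * ∑ k ∈ Finset.range K, ‖Φ' (x k)‖ ^ 2 =
      (2 / (α * K)) * (((Φ (x 0) - Φstar) + (K : ℝ) * ((α / 2) * C ^ 2)) -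
        (α / 2) * ∑ k ∈ Finset.range K, ‖Φ' (x k)‖ ^ 2) := by
    field_simp
  rw [expand]
  exact mul_nonneg (by positivity) (sub_nonneg.mpr hsum)
end
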